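/- arXiv:1902.01149 — 7 statements merged into one kernel-verified Lean document; each statement's English description precedes it below -/
import Mathlib

section
/- Let 𝔖 be a finite system of polynomial equations with rational coefficients in s variables that is dilation invariant. Then 𝔖 is partition regular over ℕ if and only if 𝔖 has a non-trivial solution with all entries inside every multiplicatively syndetic subset of ℕ. -/
/-!
Colourings of `ℕ` form a compact space on which `ℕ+` acts by dilation.

If the system is partition regular and `S` is multiplicatively `F`-syndetic, colour each `n` by
some `t ∈ F` with `n * t ∈ S`: a monochromatic solution, dilated by its colour, lies in `S`.

Conversely, let `χ` be a colouring. By Zorn and compactness the orbit closure of `χ` contains a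
minimal subsystem `K`; pick `σ ∈ K`. Every point of `K` has `σ` in its orbit closure, so by
compactness finitely many dilations `t ∈ F` bring every point of `K` into the open set
`{τ | τ 1 = σ 1}`, and applied to the dilates of `σ` this says that `{n | σ n = σ 1}` is
multiplicatively `F`-syndetic. A solution `x` inside this class is monochromatic for `σ`, hence,
as it involves only finitely many coordinates, `m * x` is monochromatic for `χ` for some `m`;
by dilation invariance `m * x` is again a solution.
-/

open MvPolynomial

/-- `x : ℕ^s` is a solution of the system given by polynomials `p j`:
all entries are positive integers and every polynomial vanishes at `x`. -/
def IsSolution {s k : ℕ} (p : Fin k → MvPolynomial (Fin s) ℚ) (x : Fin s → ℕ) : Prop :=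
  (∀ i, 0 < x i) ∧ ∀ j, eval (fun i => (x i : ℚ)) (p j) = 0

/-- A tuple is non-trivial if its coordinates are not all equal. -/
def IsNontrivial {s : ℕ} (x : Fin s → ℕ) : Prop :=
  ∃ i j, x i ≠ x j

/-- The system is dilation invariant: rational solutions are preserved by dilations. -/
def DilationInvariant {s k : ℕ} (p : Fin k → MvPolynomial (Fin s) ℚ) : Prop :=
  ∀ x : Fin s → ℚ, (∀ j, eval x (p j) = 0) →
    ∀ lam : ℚ, ∀ j, eval (fun i => lam * x i) (p j) = 0

/-- The system is `r`-regular over `X ⊆ ℕ`: every `r`-colouring of ℕ admits a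
monochromatic non-trivial solution with all coordinates in `X`. -/
def RRegularOver {s k : ℕ} (p : Fin k → MvPolynomial (Fin s) ℚ) (X : Set ℕ) (r : ℕ) : Prop :=
  ∀ χ : ℕ → Fin r, ∃ x : Fin s → ℕ, IsSolution p x ∧ IsNontrivial x ∧
    (∀ i, x i ∈ X) ∧ ∀ i j, χ (x i) = χ (x j)

/-- The system is partition regular over `X`: `r`-regular over `X` for every `r`. -/
def PartitionRegularOver {s k : ℕ} (p : Fin k → MvPolynomial (Fin s) ℚ) (X : Set ℕ) : Prop :=
  ∀ r : ℕ, RRegularOver p X r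

/-- `S` is multiplicatively `F`-syndetic: every positive `n` has some `t ∈ F` with `n*t ∈ S`. -/
def MultSyndeticWith (F : Finset ℕ) (S : Set ℕ) : Prop :=
  ∀ n : ℕ, 0 < n → ∃ t ∈ F, n * t ∈ S

/-- `S` is multiplicatively syndetic: multiplicatively `F`-syndetic for some nonempty
finite set `F` of positive integers. -/
def MultSyndetic (S : Set ℕ) : Prop :=
  ∃ F : Finset ℕ, F.Nonempty ∧ (∀ t ∈ F, 0 < t) ∧ MultSyndeticWith F S

/-- `T` is multiplicatively thick: every finite set of positive integers has a dilate inside `T`. -/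
def MultThick (T : Set ℕ) : Prop :=
  ∀ F : Finset ℕ, (∀ t ∈ F, 0 < t) → ∃ n : ℕ, 0 < n ∧ ∀ t ∈ F, n * t ∈ T

open MulAction Set
open scoped Pointwise

section Dynamics

variable (M : Type*) {X : Type*} [Monoid M] [MulAction M X] [TopologicalSpace X]

def IsSubsystem (K : Set X) : Prop :=
  K.Nonempty ∧ IsClosed K ∧ ∀ c : M, c • K ⊆ K

variable {M}

theorem isSubsystem_closure_orbit [ContinuousConstSMul M X] (x : X) :
    IsSubsystem M (closure (orbit M x)) :=
  ⟨(nonempty_orbit x).closure, isClosed_closure, fun c => smul_closure_orbit_subset c x⟩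

theorem IsChain.isSubsystem_sInter [CompactSpace X] {C : Set (Set X)}
    (hchain : IsChain (· ⊆ ·) C) (hne : C.Nonempty) (hC : ∀ K ∈ C, IsSubsystem M K) :
    IsSubsystem M (⋂₀ C) := by
  have : Nonempty C := hne.to_subtype
  refine ⟨?_, isClosed_sInter fun K hK => (hC K hK).2.1, fun c => ?_⟩
  · exact IsCompact.nonempty_sInter_of_directed_nonempty_isCompact_isClosed
      (IsChain.directedOn (r := fun K L : Set X => K ⊇ L) hchain.symm) (fun K hK => (hC K hK).1)
      (fun K hK => (hC K hK).2.1.isCompact) (fun K hK => (hC K hK).2.1)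
  · exact subset_sInter fun K hK =>
      (smul_set_mono (sInter_subset_of_mem hK)).trans ((hC K hK).2.2 c)

theorem IsSubsystem.exists_minimal_subset [CompactSpace X] {K : Set X} (hK : IsSubsystem M K) :
    ∃ L ⊆ K, Minimal (IsSubsystem M) L :=
  zorn_superset_nonempty {L | IsSubsystem M L}
    (fun C hC hchain hne => ⟨⋂₀ C, hchain.isSubsystem_sInter hne hC,
      fun _ => sInter_subset_of_mem⟩) K hK

theorem subset_closure_orbit_of_minimal [ContinuousConstSMul M X] {K : Set X}
    (hK : Minimal (IsSubsystem M) K) {z : X} (hz : z ∈ K) : K ⊆ closure (orbit M z) := by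
  have horbit : orbit M z ⊆ K := by
    rintro _ ⟨c, rfl⟩
    exact hK.prop.2.2 c (smul_mem_smul_set hz)
  exact (hK.eq_of_subset (isSubsystem_closure_orbit z)
    (closure_minimal horbit hK.prop.2.1)).symm.subset

theorem exists_finset_smul_mem_of_minimal [CompactSpace X] [ContinuousConstSMul M X]
    {K U : Set X} (hK : Minimal (IsSubsystem M) K) (hU : IsOpen U) (hKU : (K ∩ U).Nonempty) :
    ∃ F : Finset M, ∀ z ∈ K, ∃ t ∈ F, t • z ∈ U := by
  obtain ⟨y, hyK, hyU⟩ := hKU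
  have hcover : K ⊆ ⋃ t : M, (t • ·) ⁻¹' U := fun z hz => by
    obtain ⟨_, htU, t, rfl⟩ :=
      mem_closure_iff.1 (subset_closure_orbit_of_minimal hK hz hyK) U hU hyU
    exact mem_iUnion.2 ⟨t, htU⟩
  obtain ⟨F, hF⟩ := hK.prop.2.1.isCompact.elim_finite_subcover _
    (fun t => hU.preimage (continuous_const_smul t)) hcover
  exact ⟨F, fun z hz => by simpa using hF hz⟩

end Dynamics

abbrev Colouring (r : ℕ) : Type := ℕ → Fin r

namespace Colouring

variable {r : ℕ}

instance : MulAction ℕ+ (Colouring r) where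
  smul n χ a := χ (n * a)
  one_smul χ := funext fun a => congrArg χ (one_mul a)
  mul_smul m n χ := funext fun a => congrArg χ (by push_cast; ring)

theorem smul_apply (n : ℕ+) (χ : Colouring r) (a : ℕ) : (n • χ) a = χ (n * a) := rfl

instance : ContinuousConstSMul ℕ+ (Colouring r) :=
  ⟨fun n => continuous_pi fun a => continuous_apply (n * a : ℕ)⟩

theorem exists_smul_eqOn_of_mem_closure_orbit {χ σ : Colouring r}
    (hσ : σ ∈ closure (orbit ℕ+ χ)) {A : Set ℕ} (hA : A.Finite) :
    ∃ m : ℕ+, ∀ a ∈ A, χ (m * a) = σ a := by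
  have hU : IsOpen (A.pi fun a => ({σ a} : Set (Fin r))) :=
    isOpen_set_pi hA fun _ _ => isOpen_discrete _
  obtain ⟨_, hτ, m, rfl⟩ := mem_closure_iff.1 hσ _ hU fun a _ => rfl
  exact ⟨m, fun a ha => hτ a ha⟩

theorem exists_mem_closure_orbit_multSyndetic (χ : Colouring r) :
    ∃ σ ∈ closure (orbit ℕ+ χ), MultSyndetic {n | σ n = σ 1} := by
  obtain ⟨K, hKχ, hK⟩ := (isSubsystem_closure_orbit (M := ℕ+) χ).exists_minimal_subset
  obtain ⟨σ, hσ⟩ := hK.prop.1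
  have hU : IsOpen ((fun τ : Colouring r => τ 1) ⁻¹' {σ 1}) :=
    (isOpen_discrete _).preimage (continuous_apply 1)
  obtain ⟨F, hF⟩ := exists_finset_smul_mem_of_minimal hK hU ⟨σ, hσ, rfl⟩
  refine ⟨σ, hKχ hσ, F.image (↑), ?_, ?_, fun n hn => ?_⟩
  · obtain ⟨t, ht, -⟩ := hF σ hσ
    exact ⟨t, Finset.mem_image_of_mem _ ht⟩
  · simp
  · obtain ⟨t, ht, hσt⟩ := hF (n.toPNat hn • σ) (hK.prop.2.2 _ (smul_mem_smul_set hσ))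
    rw [mem_preimage, smul_apply, smul_apply, mul_one, mem_singleton_iff] at hσt
    exact ⟨t, Finset.mem_image_of_mem _ ht, hσt⟩

end Colouring

section PartitionRegular

variable {s k : ℕ} {p : Fin k → MvPolynomial (Fin s) ℚ}

theorem IsSolution.dilate {x : Fin s → ℕ} (hx : IsSolution p x) (hdil : DilationInvariant p)
    {n : ℕ} (hn : 0 < n) : IsSolution p fun i => n * x i := by
  refine ⟨fun i => Nat.mul_pos hn (hx.1 i), fun j => ?_⟩
  simpa using hdil _ hx.2 n j

theorem IsNontrivial.dilate {x : Fin s → ℕ} (hx : IsNontrivial x) {n : ℕ} (hn : 0 < n) :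
    IsNontrivial fun i => n * x i := by
  obtain ⟨i, j, hij⟩ := hx
  exact ⟨i, j, fun h => hij (Nat.eq_of_mul_eq_mul_left hn h)⟩

theorem PartitionRegularOver.exists_monochromatic {X : Set ℕ} {α : Type*} [Finite α]
    (h : PartitionRegularOver p X) (c : ℕ → α) :
    ∃ x, IsSolution p x ∧ IsNontrivial x ∧ (∀ i, x i ∈ X) ∧ ∀ i j, c (x i) = c (x j) := by
  obtain ⟨r, ⟨e⟩⟩ := Finite.exists_equiv_fin α
  obtain ⟨x, hx, hnt, hX, hmono⟩ := h r (e ∘ c)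
  exact ⟨x, hx, hnt, hX, fun i j => e.injective (hmono i j)⟩

theorem PartitionRegularOver.exists_solution_of_multSyndetic
    (h : PartitionRegularOver p {n | 0 < n}) (hdil : DilationInvariant p) {S : Set ℕ}
    (hS : MultSyndetic S) : ∃ x, IsSolution p x ∧ IsNontrivial x ∧ ∀ i, x i ∈ S := by
  obtain ⟨F, ⟨t₀, ht₀⟩, hFpos, hFS⟩ := hS
  choose! t htF htS using hFS
  let c : ℕ → F := fun n => if hn : 0 < n then ⟨t n, htF n hn⟩ else ⟨t₀, ht₀⟩
  obtain ⟨x, hx, hnt, hX, hmono⟩ := h.exists_monochromatic c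
  have hpos : ∀ i, 0 < x i := hX
  have ⟨i₀, _⟩ := hnt
  have hconst : ∀ i, t (x i) = t (x i₀) := fun i => by
    simpa [c, hpos i, hpos i₀] using congrArg Subtype.val (hmono i i₀)
  have ht : 0 < t (x i₀) := hFpos _ (htF _ (hpos i₀))
  refine ⟨_, hx.dilate hdil ht, hnt.dilate ht, fun i => ?_⟩
  rw [← hconst i, mul_comm]
  exact htS _ (hpos i)

theorem partitionRegularOver_of_forall_multSyndetic (hdil : DilationInvariant p)
    (h : ∀ S : Set ℕ, MultSyndetic S → ∃ x, IsSolution p x ∧ IsNontrivial x ∧ ∀ i, x i ∈ S) :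
    PartitionRegularOver p {n | 0 < n} := by
  intro r χ
  obtain ⟨σ, hσχ, hS⟩ := Colouring.exists_mem_closure_orbit_multSyndetic (χ : Colouring r)
  obtain ⟨x, hx, hnt, hxS⟩ := h _ hS
  obtain ⟨m, hm⟩ := Colouring.exists_smul_eqOn_of_mem_closure_orbit hσχ (finite_range x)
  have hmono : ∀ i, χ (m * x i) = σ 1 := fun i => (hm _ (mem_range_self i)).trans (hxS i)
  exact ⟨_, hx.dilate hdil m.pos, hnt.dilate m.pos, (hx.dilate hdil m.pos).1,
    fun i j => (hmono i).trans (hmono j).symm⟩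

end PartitionRegular

/-- A dilation invariant finite system of polynomial equations is
partition regular over ℕ iff it has a non-trivial solution inside every
multiplicatively syndetic set. -/
theorem partition_regular_iff_syndetic_solution {s k : ℕ}
    (p : Fin k → MvPolynomial (Fin s) ℚ) (hdil : DilationInvariant p) :
    PartitionRegularOver p {n : ℕ | 0 < n} ↔
      ∀ S : Set ℕ, MultSyndetic S →
        ∃ x : Fin s → ℕ, IsSolution p x ∧ IsNontrivial x ∧ ∀ i, x i ∈ S :=
  ⟨fun h _ hS => h.exists_solution_of_multSyndetic hdil hS,
    partitionRegularOver_of_forall_multSyndetic hdil⟩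
end

section
/- Let 𝔖 be a dilation invariant finite system of polynomial equations with rational coefficients, and let r ∈ ℕ. The following are equivalent: (I) 𝔖 is r-regular over ℕ; (II) 𝔖 is r-regular over every multiplicatively thick subset of ℕ; (III) 𝔖 is r-regular over some multiplicatively thick subset of ℕ. -/
open MvPolynomial

/-! By compactness, `r`-regularity over ℕ already provides monochromatic solutions inside
`{1, …, N}` for one fixed `N`. A thick set `T` contains a dilate `n • {1, …, N}`, and by
dilation invariance a monochromatic solution for the colouring `m ↦ χ (n * m)` dilates to a
`χ`-monochromatic solution in `T`. -/

lemma Ultrafilter.exists_eventually_eq {ι α : Type*} [Finite α] (U : Ultrafilter ι)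
    (f : ι → α) : ∃ a, ∀ᶠ i in (U : Filter ι), f i = a := by
  obtain ⟨a, ha⟩ := (U.map f).eq_pure_of_finite
  exact ⟨a, show ({a} : Set α) ∈ U.map f by rw [ha]; rfl⟩

lemma multThick_univ : MultThick Set.univ := fun _ _ => ⟨1, one_pos, fun _ _ => trivial⟩

section

variable {s k : ℕ} {p : Fin k → MvPolynomial (Fin s) ℚ} {r : ℕ}

lemma IsSolution.mul (hdil : DilationInvariant p) {x : Fin s → ℕ} (hx : IsSolution p x)
    {n : ℕ} (hn : 0 < n) : IsSolution p (fun i => n * x i) := by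
  refine ⟨fun i => Nat.mul_pos hn (hx.1 i), fun j => ?_⟩
  simpa only [Nat.cast_mul] using hdil (fun i => (x i : ℚ)) hx.2 n j

lemma IsNontrivial.mul {x : Fin s → ℕ} (hx : IsNontrivial x) {n : ℕ} (hn : 0 < n) :
    IsNontrivial (fun i => n * x i) := by
  obtain ⟨i, j, hij⟩ := hx
  exact ⟨i, j, fun h => hij (Nat.eq_of_mul_eq_mul_left hn h)⟩

lemma RRegularOver.mono {X Y : Set ℕ} (h : RRegularOver p X r) (hXY : X ⊆ Y) :
    RRegularOver p Y r := fun χ => by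
  obtain ⟨x, hsol, hnt, hX, hmono⟩ := h χ
  exact ⟨x, hsol, hnt, fun i => hXY (hX i), hmono⟩

lemma RRegularOver.inter_pos {X : Set ℕ} (h : RRegularOver p X r) :
    RRegularOver p (X ∩ {n | 0 < n}) r := fun χ => by
  obtain ⟨x, hsol, hnt, hX, hmono⟩ := h χ
  exact ⟨x, hsol, hnt, fun i => ⟨hX i, hsol.1 i⟩, hmono⟩

lemma RRegularOver.of_mul_mem (hdil : DilationInvariant p) {X T : Set ℕ}
    (h : RRegularOver p X r) {n : ℕ} (hn : 0 < n) (hXT : ∀ m ∈ X, n * m ∈ T) :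
    RRegularOver p T r := fun χ => by
  obtain ⟨x, hsol, hnt, hX, hmono⟩ := h (fun m => χ (n * m))
  exact ⟨fun i => n * x i, hsol.mul hdil hn, hnt.mul hn, fun i => hXT _ (hX i), hmono⟩

/-- Compactness: otherwise a limit along an ultrafilter of colourings without bounded
monochromatic solutions would have no monochromatic solution at all. -/
lemma RRegularOver.exists_inter_Iic {X : Set ℕ} (h : RRegularOver p X r) :
    ∃ N, RRegularOver p (X ∩ Set.Iic N) r := by
  by_contra! hbad
  simp only [RRegularOver, not_forall, not_exists, not_and] at hbad
  choose χ hχ using hbad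
  choose ψ hψ using fun m => (Filter.hyperfilter ℕ).exists_eventually_eq (fun N => χ N m)
  obtain ⟨x, hsol, hnt, hX, hmono⟩ := h ψ
  have hagree : ∀ᶠ N in (Filter.hyperfilter ℕ : Filter ℕ), ∀ i, χ N (x i) = ψ (x i) :=
    Filter.eventually_all.mpr fun i => hψ (x i)
  have hlarge : ∀ᶠ N in (Filter.hyperfilter ℕ : Filter ℕ), ∀ i, x i ≤ N :=
    Filter.eventually_all.mpr fun i => Nat.hyperfilter_le_atTop (Filter.eventually_ge_atTop _)
  obtain ⟨N, hNagree, hNlarge⟩ := (hagree.and hlarge).exists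
  obtain ⟨i, j, hij⟩ := hχ N x hsol hnt fun i => ⟨hX i, hNlarge i⟩
  exact hij (by rw [hNagree i, hNagree j, hmono i j])

end

/-- For a dilation invariant system, `r`-regularity over ℕ,
over every multiplicatively thick set, and over some multiplicatively thick set
are all equivalent. -/
theorem rRegular_tfae_thick {s k : ℕ}
    (p : Fin k → MvPolynomial (Fin s) ℚ) (hdil : DilationInvariant p) (r : ℕ) :
    List.TFAE
      [RRegularOver p {n : ℕ | 0 < n} r,
       ∀ T : Set ℕ, MultThick T → RRegularOver p T r,
       ∃ T : Set ℕ, MultThick T ∧ RRegularOver p T r] := by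
  tfae_have 1 → 2 := by
    intro h T hT
    obtain ⟨N, hN⟩ := h.exists_inter_Iic
    obtain ⟨n, hn, hnT⟩ := hT (Finset.Icc 1 N) fun t ht => (Finset.mem_Icc.mp ht).1
    exact hN.of_mul_mem hdil hn fun m hm => hnT m (Finset.mem_Icc.mpr hm)
  tfae_have 2 → 3 := fun h => ⟨Set.univ, multThick_univ, h _ multThick_univ⟩
  tfae_have 3 → 1 := fun ⟨_, _, h⟩ => h.inter_pos.mono Set.inter_subset_right
  tfae_finish
end

section
/- Let S ⊆ ℕ be multiplicatively piecewise F-syndetic for a nonempty finite set F ⊂ ℕ, let 𝔖 be a dilation invariant finite system of polynomial equations with rational coefficients, and let r ∈ ℕ. If 𝔖 is (|F|·r)-regular over ℕ, then 𝔖 is r-regular over S. -/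
open MvPolynomial

/-- `S` is multiplicatively piecewise `F`-syndetic: `⋃_{t ∈ F} t⁻¹S` is
multiplicatively thick. -/
def MultPiecewiseSyndeticWith (F : Finset ℕ) (S : Set ℕ) : Prop :=
  MultThick {n : ℕ | 0 < n ∧ ∃ t ∈ F, n * t ∈ S}

/-!
Colour `m` by the pair `(τ m, χ (m * τ m))`, where `τ m ∈ F` witnesses `m ∈ ⋃_{t ∈ F} t⁻¹S`;
this uses `|F|·r` colours. Thickness of the union yields an ultrafilter `U` such that, for each
`m`, `n * m` lies in the union for `U`-almost every `n`. Colouring `m` by the `U`-limit of the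
colours of `n * m` and applying regularity over `ℕ` gives a solution `x` and an `n` such that all
`n * x i` lie in the union and share one colour, hence one `t = τ (n * x i)`. By dilation
invariance `(n * t) • x` is then a monochromatic solution inside `S`.
-/

theorem IsSolution.const_mul {s k : ℕ} {p : Fin k → MvPolynomial (Fin s) ℚ}
    (hdil : DilationInvariant p) {x : Fin s → ℕ} (hx : IsSolution p x) {c : ℕ} (hc : 0 < c) :
    IsSolution p (fun i => c * x i) := by
  refine ⟨fun i => Nat.mul_pos hc (hx.1 i), fun j => ?_⟩
  simpa only [Nat.cast_mul] using hdil _ hx.2 c j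

theorem IsNontrivial.const_mul {s : ℕ} {x : Fin s → ℕ} (hx : IsNontrivial x) {c : ℕ}
    (hc : 0 < c) : IsNontrivial (fun i => c * x i) := by
  obtain ⟨i, j, hij⟩ := hx
  exact ⟨i, j, fun h => hij (Nat.eq_of_mul_eq_mul_left hc h)⟩

theorem Ultrafilter.exists_eventually_eq_of_finite {α β : Type*} [Finite β] (U : Ultrafilter α)
    (g : α → β) : ∃ b, ∀ᶠ a in U, g a = b := by
  obtain ⟨b, hb⟩ := (U.map g).eq_pure_of_finite
  exact ⟨b, show {b} ∈ U.map g by rw [hb]; exact rfl⟩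

/-- Apply regularity to the colouring of `m` by the `U`-limit of `c (n * m)`. -/
theorem RRegularOver.exists_eventually_monochromatic_mul {s k : ℕ}
    {p : Fin k → MvPolynomial (Fin s) ℚ} {X : Set ℕ} {q : ℕ} (hreg : RRegularOver p X q)
    (U : Ultrafilter ℕ) (c : ℕ → Fin q) :
    ∃ x : Fin s → ℕ, IsSolution p x ∧ IsNontrivial x ∧ (∀ i, x i ∈ X) ∧
      ∀ᶠ n in U, ∀ i j, c (n * x i) = c (n * x j) := by
  choose ψ hψ using fun m => U.exists_eventually_eq_of_finite fun n => c (n * m)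
  obtain ⟨x, hx, hxnt, hxX, hxmono⟩ := hreg ψ
  refine ⟨x, hx, hxnt, hxX, ?_⟩
  filter_upwards [Filter.eventually_all.2 fun i => hψ (x i)] with n hn i j
  rw [hn i, hn j, hxmono i j]

theorem MultThick.exists_ultrafilter {T : Set ℕ} (hT : MultThick T) :
    ∃ U : Ultrafilter ℕ, ∀ m, 0 < m → ∀ᶠ n in U, n * m ∈ T := by
  choose f _ hf using fun G : Finset ℕ =>
    hT (G.filter (0 < ·)) fun t ht => (Finset.mem_filter.1 ht).2
  refine ⟨Ultrafilter.of (Filter.atTop.map f), fun m hm => Ultrafilter.of_le _ ?_⟩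
  exact Filter.eventually_atTop.2 ⟨{m}, fun G hG =>
    hf G m (Finset.mem_filter.2 ⟨hG (Finset.mem_singleton_self m), hm⟩)⟩

theorem MultPiecewiseSyndeticWith.nonempty {F : Finset ℕ} {S : Set ℕ}
    (hS : MultPiecewiseSyndeticWith F S) : F.Nonempty := by
  obtain ⟨n, -, hn⟩ := hS {1} (by simp)
  obtain ⟨-, t, ht, -⟩ := hn 1 (Finset.mem_singleton_self 1)
  exact ⟨t, ht⟩

theorem MultPiecewiseSyndeticWith.exists_choice {F : Finset ℕ} {S : Set ℕ}
    (hS : MultPiecewiseSyndeticWith F S) :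
    ∃ τ : ℕ → F, ∀ m, (∃ t ∈ F, m * t ∈ S) → m * τ m ∈ S := by
  obtain ⟨t₀, ht₀⟩ := hS.nonempty
  have : ∀ m, ∃ t : F, (∃ t ∈ F, m * t ∈ S) → m * t ∈ S := fun m => by
    by_cases h : ∃ t ∈ F, m * t ∈ S
    · obtain ⟨t, ht, hmt⟩ := h
      exact ⟨⟨t, ht⟩, fun _ => hmt⟩
    · exact ⟨⟨t₀, ht₀⟩, fun h' => absurd h' h⟩
  choose τ hτ using this
  exact ⟨τ, hτ⟩

theorem piecewise_syndetic_contains_PR_general {s k : ℕ}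
    (p : Fin k → MvPolynomial (Fin s) ℚ) (hdil : DilationInvariant p)
    (S : Set ℕ) (F : Finset ℕ) (hFpos : ∀ t ∈ F, 0 < t)
    (hS : MultPiecewiseSyndeticWith F S) (r : ℕ)
    (hreg : RRegularOver p {n : ℕ | 0 < n} (F.card * r)) :
    RRegularOver p S r := by
  intro χ
  obtain ⟨U, hU⟩ := MultThick.exists_ultrafilter hS
  obtain ⟨τ, hτ⟩ := hS.exists_choice
  let e : F × Fin r ≃ Fin (F.card * r) :=
    (F.equivFin.prodCongr (Equiv.refl _)).trans finProdFinEquiv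
  obtain ⟨x, hx, hxnt, hxpos, hxmono⟩ :=
    hreg.exists_eventually_monochromatic_mul U fun m => e (τ m, χ (m * τ m))
  obtain ⟨n, hnT, hnmono⟩ :=
    ((Filter.eventually_all.2 fun i => hU (x i) (hxpos i)).and hxmono).exists
  obtain ⟨i₀, -⟩ := id hxnt
  set t : F := τ (n * x i₀)
  have hcolour i j : τ (n * x i) = τ (n * x j) ∧
      χ (n * x i * τ (n * x i)) = χ (n * x j * τ (n * x j)) :=
    Prod.ext_iff.1 (e.injective (hnmono i j))
  have hdilate i : n * t * x i = n * x i * τ (n * x i) := by rw [(hcolour i i₀).1]; ring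
  have hnt : 0 < n * t := Nat.mul_pos (Nat.pos_of_mul_pos_right (hnT i₀).1) (hFpos t t.2)
  refine ⟨fun i => n * t * x i, hx.const_mul hdil hnt, hxnt.const_mul hnt,
    fun i => ?_, fun i j => ?_⟩
  · dsimp only; rw [hdilate]; exact hτ _ (hnT i).2
  · dsimp only; rw [hdilate, hdilate]; exact (hcolour i j).2

/-- Piecewise syndetic sets contain partition regular configurations:
if a dilation invariant system is `(|F|·r)`-regular over ℕ, then it is `r`-regular over
any multiplicatively piecewise `F`-syndetic set `S`. -/
theorem piecewise_syndetic_contains_PR {s k : ℕ}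
    (p : Fin k → MvPolynomial (Fin s) ℚ) (hdil : DilationInvariant p)
    (S : Set ℕ) (F : Finset ℕ) (hFne : F.Nonempty) (hFpos : ∀ t ∈ F, 0 < t)
    (hS : MultPiecewiseSyndeticWith F S) (r : ℕ)
    (hreg : RRegularOver p {n : ℕ | 0 < n} (F.card * r)) :
    RRegularOver p S r :=
  piecewise_syndetic_contains_PR_general p hdil S F hFpos hS r hreg
end

section
/- Let F ⊂ ℕ be a nonempty finite set with largest element M, and let N ∈ ℕ. If S ⊆ ℕ is multiplicatively F-syndetic, then |S ∩ {1,…,N}| ≥ (1/|F|)·⌊N/M⌋. -/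
/-! Pick for each `n ≥ 1` a witness `g n ∈ F` with `n * g n ∈ S`. For `n ≤ ⌊N/M⌋` the product
`n * g n` lies in `S ∩ [1, N]`, and `n ↦ n * g n` is at most `|F|`-to-one because `n` is determined
by the product together with the value `g n ∈ F`. -/

open Finset

theorem card_le_card_mul_card_image_mul {s F : Finset ℕ} {g : ℕ → ℕ}
    (hg : Set.MapsTo g s F) (hF : ∀ t ∈ F, 0 < t) :
    #s ≤ #F * #(s.image fun n => n * g n) := by
  refine card_le_mul_card_image s #F fun b _ => card_le_card_of_injOn g ?_ ?_
  · exact fun n hn => hg (mem_filter.mp hn).1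
  · intro n₁ h₁ n₂ h₂ hgn
    rw [mem_coe, mem_filter] at h₁ h₂
    refine Nat.eq_of_mul_eq_mul_right (hF _ (hg h₁.1)) ?_
    rw [h₁.2, hgn, h₂.2]

theorem MultSyndeticWith.exists_witness {F : Finset ℕ} {S : Set ℕ} (hS : MultSyndeticWith F S) :
    ∃ g : ℕ → ℕ, ∀ n, 0 < n → g n ∈ F ∧ n * g n ∈ S := by
  have : ∀ n, ∃ t, 0 < n → t ∈ F ∧ n * t ∈ S := fun n =>
    if hn : 0 < n then (hS n hn).imp fun _ ht _ => ht else ⟨0, fun h => absurd h hn⟩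
  choose g hg using this
  exact ⟨g, hg⟩

/-- A multiplicatively `F`-syndetic set `S` with `M = max F` satisfies
`|S ∩ [N]| ≥ ⌊N/M⌋ / |F|`. -/
theorem syndetic_density (F : Finset ℕ) (hFne : F.Nonempty) (hFpos : ∀ t ∈ F, 0 < t)
    (M : ℕ) (hM : M = F.max' hFne) (N : ℕ) (S : Set ℕ)
    (hS : MultSyndeticWith F S) :
    ((N / M : ℕ) : ℝ) / F.card ≤ ((S ∩ Set.Icc 1 N).ncard : ℝ) := by
  obtain ⟨g, hg⟩ := hS.exists_witness
  have hmaps : Set.MapsTo g (Icc 1 (N / M)) F := fun n hn => (hg n (mem_Icc.mp hn).1).1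
  have himage : ↑((Icc 1 (N / M)).image fun n => n * g n) ⊆ S ∩ Set.Icc 1 N := by
    intro b hb
    obtain ⟨n, hn, rfl⟩ := mem_image.mp hb
    obtain ⟨hn1, hnK⟩ := mem_Icc.mp hn
    obtain ⟨hgF, hgS⟩ := hg n hn1
    refine ⟨hgS, Nat.mul_pos hn1 (hFpos _ hgF), ?_⟩
    calc n * g n ≤ N / M * M := Nat.mul_le_mul hnK (hM ▸ F.le_max' _ hgF)
      _ ≤ N := Nat.div_mul_le_self N M
  have hcount : N / M ≤ #F * (S ∩ Set.Icc 1 N).ncard := by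
    have hle := Set.ncard_le_ncard himage ((Set.finite_Icc 1 N).inter_of_right S)
    rw [Set.ncard_coe_finset] at hle
    simpa using (card_le_card_mul_card_image_mul hmaps hFpos).trans (Nat.mul_le_mul_left _ hle)
  rw [div_le_iff₀ (by exact_mod_cast hFne.card_pos), mul_comm]
  exact_mod_cast hcount
end

section
/- Let a, k ∈ ℕ with a ≥ 2 and k ≥ 2, let F = {1, a, a², …, a^{k−1}}, and define S(a,k) := {n ∈ ℕ : ν_a(n) ≡ k−1 (mod k)}, where ν_a(n) := max{j ∈ ℕ ∪ {0} : a^j ∣ n}. Then S(a,k) is multiplicatively F-syndetic, and S(a,k) has natural asymptotic density (a−1)/(a^k−1), i.e. |S(a,k) ∩ {1,…,N}|/N → (a−1)/(a^k−1) as N → ∞. -/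
/-- The `a`-multiplicity `ν_a(n)`: the largest `j` with `a^j ∣ n` (for `a ≥ 2`, `n ≥ 1`). -/
def nuMult (a n : ℕ) : ℕ := Nat.findGreatest (fun j => a ^ j ∣ n) n

/-- The set `S(a,k) = {n ∈ ℕ : ν_a(n) ≡ k-1 (mod k)}`. -/
def Sak (a k : ℕ) : Set ℕ := {n : ℕ | 0 < n ∧ nuMult a n % k = k - 1}

/-! Multiplying by `a ^ j` shifts `ν_a` by `j`, so one of `n, n a, …, n a ^ (k - 1)` lies in
`S(a,k)`. The elements of `S(a,k) ∩ [1, N]` are those with `ν_a = k - 1`, of which there are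
`⌊N / a ^ (k - 1)⌋ - ⌊N / a ^ k⌋`, together with `a ^ k` times the elements of
`S(a,k) ∩ [1, N / a ^ k]`. Comparing this recursion with `c N`, where
`c = (a - 1) / (a ^ k - 1)` is its fixed point, the error grows by at most `1` each time `N` is
divided by `a ^ k`; it is therefore `O(log N) = o(N)`. -/

open Filter Topology

theorem pow_dvd_iff_le_nuMult {a n j : ℕ} (ha : 1 < a) (hn : 0 < n) :
    a ^ j ∣ n ↔ j ≤ nuMult a n := by
  constructor
  · intro h
    have hjn : j ≤ n := calc
      j ≤ a ^ j := (Nat.lt_pow_self ha).le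
      _ ≤ n := Nat.le_of_dvd hn h
    exact Nat.le_findGreatest hjn h
  · intro h
    have hspec : a ^ nuMult a n ∣ n :=
      Nat.findGreatest_spec (P := fun j => a ^ j ∣ n) (Nat.zero_le n) (by simp)
    exact (pow_dvd_pow a h).trans hspec

theorem nuMult_mul_pow {a n : ℕ} (ha : 1 < a) (hn : 0 < n) (j : ℕ) :
    nuMult a (n * a ^ j) = nuMult a n + j := by
  refine eq_of_forall_le_iff fun i => ?_
  rw [← pow_dvd_iff_le_nuMult ha (by positivity)]
  rcases le_or_gt i j with hij | hji
  · exact iff_of_true (dvd_mul_of_dvd_right (pow_dvd_pow a hij) n) (by omega)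
  · obtain ⟨i, rfl⟩ := Nat.exists_eq_add_of_lt hji
    rw [show j + i + 1 = (i + 1) + j by omega, pow_add,
      Nat.mul_dvd_mul_iff_right (by positivity), pow_dvd_iff_le_nuMult ha hn]
    omega

theorem multSyndeticWith_Sak {a k : ℕ} (ha : 1 < a) (hk : 0 < k) :
    MultSyndeticWith ((Finset.range k).image (fun j => a ^ j)) (Sak a k) := by
  intro n hn
  set j := k - 1 - nuMult a n % k
  have hmod : nuMult a n % k < k := Nat.mod_lt _ hk
  refine ⟨a ^ j, Finset.mem_image_of_mem _ (Finset.mem_range.2 (by omega)), by positivity, ?_⟩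
  rw [nuMult_mul_pow ha hn, Nat.add_mod, Nat.mod_eq_of_lt (show j < k by omega),
    Nat.mod_eq_of_lt (by omega)]
  omega

theorem ncard_setOf_dvd_inter_Icc (N d : ℕ) : {n ∈ Set.Icc 1 N | d ∣ n}.ncard = N / d := by
  rw [← Nat.Ioc_filter_dvd_card_eq_div, ← Set.ncard_coe_finset]
  congr 1
  ext n
  simp [Nat.one_le_iff_ne_zero, Nat.pos_iff_ne_zero]

theorem ncard_setOf_nuMult_eq_inter_Icc {a : ℕ} (ha : 1 < a) (N j : ℕ) :
    {n ∈ Set.Icc 1 N | nuMult a n = j}.ncard = N / a ^ j - N / a ^ (j + 1) := by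
  have hdiff : {n ∈ Set.Icc 1 N | nuMult a n = j} =
      {n ∈ Set.Icc 1 N | a ^ j ∣ n} \ {n ∈ Set.Icc 1 N | a ^ (j + 1) ∣ n} := by
    ext n
    simp only [Set.mem_sdiff, Set.mem_ofPred_eq, Set.mem_Icc]
    constructor
    · rintro ⟨hn, rfl⟩
      rw [pow_dvd_iff_le_nuMult ha hn.1, pow_dvd_iff_le_nuMult ha hn.1]
      omega
    · rintro ⟨⟨hn, hj⟩, hj1⟩
      rw [pow_dvd_iff_le_nuMult ha hn.1] at hj
      rw [pow_dvd_iff_le_nuMult ha hn.1] at hj1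
      exact ⟨hn, by omega⟩
  have hsub : {n ∈ Set.Icc 1 N | a ^ (j + 1) ∣ n} ⊆ {n ∈ Set.Icc 1 N | a ^ j ∣ n} :=
    fun n ⟨hn, hdvd⟩ => ⟨hn, (pow_dvd_pow a j.le_succ).trans hdvd⟩
  rw [hdiff, Set.ncard_sdiff hsub ((Set.finite_Icc 1 N).subset fun _ h => h.1),
    ncard_setOf_dvd_inter_Icc, ncard_setOf_dvd_inter_Icc]

theorem mul_pow_mem_Sak_iff {a k n : ℕ} (ha : 1 < a) :
    n * a ^ k ∈ Sak a k ↔ n ∈ Sak a k := by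
  rcases Nat.eq_zero_or_pos n with rfl | hn
  · simp [Sak]
  · simp only [Sak, Set.mem_ofPred_eq, nuMult_mul_pow ha hn, Nat.add_mod_right]
    exact and_congr_left fun _ => iff_of_true (by positivity) hn

theorem Sak_inter_Icc_eq {a k : ℕ} (ha : 1 < a) (hk : 0 < k) (N : ℕ) :
    Sak a k ∩ Set.Icc 1 N =
      {n ∈ Set.Icc 1 N | nuMult a n = k - 1} ∪
        (· * a ^ k) '' (Sak a k ∩ Set.Icc 1 (N / a ^ k)) := by
  ext n
  simp only [Set.mem_inter_iff, Set.mem_union, Set.mem_ofPred_eq, Set.mem_image, Set.mem_Icc]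
  constructor
  · rintro ⟨hS, h1, hN⟩
    rcases lt_or_ge (nuMult a n) k with hlt | hge
    · left
      exact ⟨⟨h1, hN⟩, by rw [← hS.2, Nat.mod_eq_of_lt hlt]⟩
    · right
      obtain ⟨m, rfl⟩ := (pow_dvd_iff_le_nuMult ha hS.1).2 hge
      rw [mul_comm] at hS hN h1 ⊢
      have hm : m ≤ N / a ^ k := (Nat.le_div_iff_mul_le (by positivity)).2 hN
      exact ⟨m, ⟨(mul_pow_mem_Sak_iff ha).1 hS, Nat.pos_of_mul_pos_right h1, hm⟩, rfl⟩
  · rintro (⟨⟨h1, hN⟩, hν⟩ | ⟨m, ⟨hS, h1, hm⟩, rfl⟩)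
    · exact ⟨⟨h1, by rw [hν, Nat.mod_eq_of_lt (by omega)]⟩, h1, hN⟩
    · refine ⟨(mul_pow_mem_Sak_iff ha).2 hS, ?_, (Nat.le_div_iff_mul_le (by positivity)).1 hm⟩
      exact Nat.mul_pos h1 (by positivity)

theorem ncard_Sak_inter_Icc {a k : ℕ} (ha : 1 < a) (hk : 0 < k) (N : ℕ) :
    (Sak a k ∩ Set.Icc 1 N).ncard =
      N / a ^ (k - 1) - N / a ^ k + (Sak a k ∩ Set.Icc 1 (N / a ^ k)).ncard := by
  have hdisj : Disjoint {n ∈ Set.Icc 1 N | nuMult a n = k - 1}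
      ((· * a ^ k) '' (Sak a k ∩ Set.Icc 1 (N / a ^ k))) := by
    refine Set.disjoint_left.2 fun n ⟨_, hν⟩ ⟨m, ⟨hS, _⟩, hmn⟩ => ?_
    subst hmn
    rw [nuMult_mul_pow ha hS.1] at hν
    omega
  rw [Sak_inter_Icc_eq ha hk, Set.ncard_union_eq hdisj, ncard_setOf_nuMult_eq_inter_Icc ha,
    Nat.sub_add_cancel hk, Set.ncard_image_of_injective _ (mul_left_injective₀ (by positivity))]

theorem abs_le_mul_length_digits {g : ℕ → ℝ} {b : ℕ} {C : ℝ} (hb : 1 < b) (hg0 : g 0 = 0)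
    (hg : ∀ N, |g N| ≤ C + |g (N / b)|) (N : ℕ) : |g N| ≤ C * (b.digits N).length := by
  induction N using Nat.strong_induction_on with
  | _ N ih =>
    rcases Nat.eq_zero_or_pos N with rfl | hN
    · simp [hg0]
    · rw [Nat.digits_eq_cons_digits_div hb hN.ne', List.length_cons, Nat.cast_succ, mul_add_one]
      linarith [hg N, ih (N / b) (Nat.div_lt_self hN hb)]

theorem tendsto_length_digits_div_atTop {b : ℕ} (hb : 1 < b) :
    Tendsto (fun N : ℕ => ((b.digits N).length : ℝ) / N) atTop (𝓝 0) := by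
  have hlog : Tendsto (fun N : ℕ => Real.log N / N) atTop (𝓝 0) :=
    Real.isLittleO_log_id_atTop.tendsto_div_nhds_zero.comp tendsto_natCast_atTop_atTop
  have hbound : Tendsto (fun N : ℕ => Real.log N / N / Real.log b + 1 / N) atTop (𝓝 0) := by
    simpa using (hlog.div_const (Real.log b)).add tendsto_one_div_atTop_nhds_zero_nat
  refine squeeze_zero' (Eventually.of_forall fun N => by positivity) ?_ hbound
  filter_upwards [eventually_gt_atTop 0] with N hN
  rw [Nat.length_digits b N hb hN.ne', Nat.cast_succ, add_div, div_right_comm _ (N : ℝ)]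
  gcongr
  exact Real.natLog_le_logb N b

theorem natCast_div_bounds (N d : ℕ) :
    (N : ℝ) / d - 1 < ((N / d : ℕ) : ℝ) ∧ ((N / d : ℕ) : ℝ) ≤ (N : ℝ) / d := by
  refine ⟨?_, Nat.cast_div_le⟩
  have h := Nat.lt_floor_add_one ((N : ℝ) / d)
  rw [Nat.floor_div_eq_div] at h
  linarith

theorem abs_sub_sub_comp_div_le_one {f : ℕ → ℕ} {q r : ℕ} {c : ℝ} (hq : 0 < q) (hr : 0 < r)
    (hc : c * (q * r - 1) = r - 1) (hc0 : 0 ≤ c) (hc1 : c ≤ 1)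
    (hf : ∀ N, f N = N / q - N / (q * r) + f (N / (q * r))) (N : ℕ) :
    |((f N : ℝ) - c * N) - ((f (N / (q * r)) : ℝ) - c * (N / (q * r) : ℕ))| ≤ 1 := by
  obtain ⟨hu₁, hu₂⟩ := natCast_div_bounds N q
  obtain ⟨hv₁, hv₂⟩ := natCast_div_bounds N (q * r)
  have hsub : N / (q * r) ≤ N / q := Nat.div_le_div_left (Nat.le_mul_of_pos_right q hr) hq
  rw [hf N, Nat.cast_add, Nat.cast_sub hsub]
  push_cast at hv₁ hv₂
  set y : ℝ := (N : ℝ) / (q * r) with hy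
  have hx : (N : ℝ) / q = r * y := by rw [hy]; field_simp
  have hN : (N : ℝ) = (q * r) * y := by rw [hy]; field_simp
  have hcy : c * N = c * y + (r - 1) * y := by rw [hN, ← hc]; ring
  rw [hx] at hu₁ hu₂
  rw [hcy, abs_le]
  -- the error is `(⌊N / q⌋ - r y) - (1 - c) (⌊y⌋ - y)`, with both brackets in `(-1, 0]`
  constructor <;> nlinarith [mul_nonneg (sub_nonneg.2 hc1) (sub_nonneg.2 hv₂)]

theorem tendsto_div_of_eq_sub_add_comp_div {f : ℕ → ℕ} {q r : ℕ} (hq : 0 < q) (hr : 1 < r)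
    (hf0 : f 0 = 0) (hf : ∀ N, f N = N / q - N / (q * r) + f (N / (q * r))) :
    Tendsto (fun N => (f N : ℝ) / N) atTop (𝓝 (((r : ℝ) - 1) / (q * r - 1))) := by
  set c : ℝ := ((r : ℝ) - 1) / (q * r - 1)
  set g : ℕ → ℝ := fun N => f N - c * N
  have hb : 1 < q * r := one_lt_mul_of_le_of_lt hq hr
  have hq' : (1 : ℝ) ≤ q := by exact_mod_cast hq
  have hr' : (1 : ℝ) < r := by exact_mod_cast hr
  have hqr : (r : ℝ) ≤ q * r := le_mul_of_one_le_left (by positivity) hq'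
  have hc : c * (q * r - 1) = r - 1 := div_mul_cancel₀ _ (by nlinarith)
  have hc0 : 0 ≤ c := div_nonneg (by linarith) (by linarith)
  have hc1 : c ≤ 1 := div_le_one_of_le₀ (by linarith) (by linarith)
  have hg : ∀ N, |g N| ≤ 1 * (Nat.digits (q * r) N).length :=
    abs_le_mul_length_digits hb (by simp [g, hf0]) fun N => by
      linarith [abs_sub_sub_comp_div_le_one hq (by omega) hc hc0 hc1 hf N,
        abs_sub_abs_le_abs_sub (g N) (g (N / (q * r)))]
  have hgN : Tendsto (fun N => g N / N) atTop (𝓝 0) := by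
    refine squeeze_zero_norm (fun N => ?_) (tendsto_length_digits_div_atTop hb)
    rw [Real.norm_eq_abs, abs_div, Nat.abs_cast]
    gcongr
    simpa using hg N
  refine (by simpa using hgN.add_const c : Tendsto (fun N => g N / N + c) atTop (𝓝 c)).congr' ?_
  filter_upwards [eventually_ne_atTop 0] with N hN
  field_simp
  ring

/-- For `a, k ≥ 2` and `F = {1, a, …, a^{k-1}}`, the set `S(a,k)` is
multiplicatively `F`-syndetic, and its natural density is `(a-1)/(a^k-1)`. -/
theorem Sak_syndetic_and_density (a k : ℕ) (ha : 2 ≤ a) (hk : 2 ≤ k) :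
    MultSyndeticWith ((Finset.range k).image (fun j => a ^ j)) (Sak a k) ∧
    Filter.Tendsto (fun N : ℕ => ((Sak a k ∩ Set.Icc 1 N).ncard : ℝ) / N)
      Filter.atTop (nhds (((a : ℝ) - 1) / ((a : ℝ) ^ k - 1))) := by
  refine ⟨multSyndeticWith_Sak ha (by omega), ?_⟩
  have hsplit : a ^ (k - 1) * a = a ^ k := pow_sub_one_mul (by omega) a
  have hdensity := tendsto_div_of_eq_sub_add_comp_div
    (f := fun N => (Sak a k ∩ Set.Icc 1 N).ncard) (q := a ^ (k - 1)) (r := a) (by positivity) ha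
    (by simp) (by simpa only [hsplit] using ncard_Sak_inter_Icc ha (by omega))
  rwa [Nat.cast_pow, ← pow_succ, Nat.sub_add_cancel (by omega)] at hdensity
end

section
/- Let a, k ∈ ℕ with a ≥ 2 and k ≥ 2, let F = {1, a, a², …, a^{k−1}}, and let S(a,k) := {n ∈ ℕ : ν_a(n) ≡ k−1 (mod k)}, where ν_a(n) := max{j ∈ ℕ ∪ {0} : a^j ∣ n}. Then for every N ∈ ℕ and every multiplicatively F-syndetic set X ⊆ ℕ, one has |X ∩ {1,…,N}| ≥ |S(a,k) ∩ {1,…,N}|. -/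
section Multiplicity

variable {a m n : ℕ}

lemma pow_nuMult_dvd (a n : ℕ) : a ^ nuMult a n ∣ n :=
  Nat.findGreatest_spec (P := fun j => a ^ j ∣ n) (Nat.zero_le n) (by simp)

lemma not_pow_succ_nuMult_dvd (ha : 2 ≤ a) (hn : 0 < n) : ¬ a ^ (nuMult a n + 1) ∣ n := by
  intro h
  have hlt : nuMult a n + 1 < a ^ (nuMult a n + 1) := Nat.lt_pow_self (by omega)
  have hle : nuMult a n + 1 ≤ n := by have := Nat.le_of_dvd hn h; omega
  exact Nat.findGreatest_is_greatest (P := fun j => a ^ j ∣ n) (Nat.lt_succ_self _) hle h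

lemma nuMult_eq_of_dvd_of_not_dvd (ha : 2 ≤ a) (hn : 0 < n) {v : ℕ} (hv : a ^ v ∣ n)
    (hv' : ¬ a ^ (v + 1) ∣ n) : nuMult a n = v := by
  refine le_antisymm ?_ (Nat.le_findGreatest (P := fun j => a ^ j ∣ n) ?_ hv)
  · by_contra! hlt
    exact hv' ((pow_dvd_pow a hlt).trans (pow_nuMult_dvd a n))
  · have : v < a ^ v := Nat.lt_pow_self (by omega)
    have := Nat.le_of_dvd hn hv
    omega

lemma nuMult_mul_pow_s10 (ha : 2 ≤ a) (hm : 0 < m) (hma : ¬ a ∣ m) (e : ℕ) :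
    nuMult a (m * a ^ e) = e := by
  refine nuMult_eq_of_dvd_of_not_dvd ha (by positivity) (dvd_mul_left _ _) fun h => hma ?_
  rw [pow_succ, mul_comm m] at h
  exact (Nat.mul_dvd_mul_iff_left (by positivity)).mp h

lemma exists_eq_mul_pow_nuMult (ha : 2 ≤ a) (hn : 0 < n) :
    ∃ m, 0 < m ∧ ¬ a ∣ m ∧ n = m * a ^ nuMult a n := by
  obtain ⟨m, hm⟩ := pow_nuMult_dvd a n
  refine ⟨m, Nat.pos_of_ne_zero ?_, ?_, hm.trans (mul_comm _ _)⟩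
  · rintro rfl
    omega
  · rintro ⟨c, rfl⟩
    exact not_pow_succ_nuMult_dvd ha hn ⟨c, by rwa [pow_succ, mul_assoc]⟩

end Multiplicity

lemma exists_eq_mul_pow_of_mem_Sak {a k s : ℕ} (ha : 2 ≤ a) (hs : s ∈ Sak a k) :
    ∃ m q, 0 < m ∧ ¬ a ∣ m ∧ s = m * a ^ (k * q + (k - 1)) := by
  obtain ⟨m, hm, hma, hsm⟩ := exists_eq_mul_pow_nuMult ha hs.1
  refine ⟨m, nuMult a s / k, hm, hma, ?_⟩
  rwa [← hs.2, Nat.div_add_mod]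

def blockTop (a k x : ℕ) : ℕ :=
  x / a ^ nuMult a x * a ^ (k * (nuMult a x / k) + (k - 1))

lemma blockTop_mul_pow {a k m q j : ℕ} (ha : 2 ≤ a) (hm : 0 < m) (hma : ¬ a ∣ m) (hj : j < k) :
    blockTop a k (m * a ^ (k * q + j)) = m * a ^ (k * q + (k - 1)) := by
  have hq : (k * q + j) / k = q := by
    rw [Nat.mul_add_div (by omega), Nat.div_eq_of_lt hj, add_zero]
  rw [blockTop, nuMult_mul_pow_s10 ha hm hma, Nat.mul_div_cancel _ (by positivity), hq]

lemma MultSyndeticWith.exists_pow_mul_mem {a k : ℕ} {X : Set ℕ}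
    (hX : MultSyndeticWith ((Finset.range k).image (a ^ ·)) X) {n : ℕ} (hn : 0 < n) :
    ∃ j < k, n * a ^ j ∈ X := by
  obtain ⟨_, ht, hnt⟩ := hX n hn
  obtain ⟨j, hj, rfl⟩ := Finset.mem_image.mp ht
  exact ⟨j, Finset.mem_range.mp hj, hnt⟩

theorem Sak_minimal_general (a k : ℕ) (ha : 2 ≤ a) (N : ℕ) (X : Set ℕ)
    (hX : MultSyndeticWith ((Finset.range k).image (fun j => a ^ j)) X) :
    (Sak a k ∩ Set.Icc 1 N).ncard ≤ (X ∩ Set.Icc 1 N).ncard := by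
  choose! j hjk hjX using fun n (hn : 0 < n) => hX.exists_pow_mul_mem hn
  set f : ℕ → ℕ := fun s => s / a ^ (k - 1) * a ^ j (s / a ^ (k - 1))
  have hf : ∀ s ∈ Sak a k ∩ Set.Icc 1 N, f s ∈ X ∩ Set.Icc 1 N ∧ blockTop a k (f s) = s := by
    rintro s ⟨hs, -, hsN⟩
    obtain ⟨m, q, hm, hma, rfl⟩ := exists_eq_mul_pow_of_mem_Sak ha hs
    set n := m * a ^ (k * q)
    have hn : 0 < n := by positivity
    have hdiv : m * a ^ (k * q + (k - 1)) / a ^ (k - 1) = n := by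
      rw [pow_add, ← mul_assoc, Nat.mul_div_cancel _ (by positivity)]
    have hfs : f (m * a ^ (k * q + (k - 1))) = m * a ^ (k * q + j n) := by
      show _ / a ^ (k - 1) * a ^ j (_ / a ^ (k - 1)) = _
      rw [hdiv, pow_add, ← mul_assoc]
    rw [hfs]
    refine ⟨⟨?_, Nat.one_le_iff_ne_zero.mpr (by positivity), ?_⟩,
      blockTop_mul_pow ha hm hma (hjk n hn)⟩
    · rw [pow_add, ← mul_assoc]
      exact hjX n hn
    · have := hjk n hn
      exact (Nat.mul_le_mul_left _ (Nat.pow_le_pow_right (by omega) (by omega))).trans hsN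
  exact Set.ncard_le_ncard_of_injOn f (fun s hs => (hf s hs).1)
    (Set.LeftInvOn.injOn fun s hs => (hf s hs).2) ((Set.finite_Icc 1 N).inter_of_right X)

/-- For `a, k ≥ 2` and `F = {1, a, …, a^{k-1}}`, the set `S(a,k)` has
minimal counting function among multiplicatively `F`-syndetic sets: for every `N` and
every multiplicatively `F`-syndetic `X`, `|X ∩ [N]| ≥ |S(a,k) ∩ [N]|`. -/
theorem Sak_minimal (a k : ℕ) (ha : 2 ≤ a) (hk : 2 ≤ k) (N : ℕ) (X : Set ℕ)
    (hX : MultSyndeticWith ((Finset.range k).image (fun j => a ^ j)) X) :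
    (Sak a k ∩ Set.Icc 1 N).ncard ≤ (X ∩ Set.Icc 1 N).ncard :=
  Sak_minimal_general a k ha N X hX
end

section
/- Let N ∈ ℕ, let p be a prime with 3N < p < 6N, let S ⊆ {1,…,N} be nonempty (viewed in ℤ/pℤ), and let f₁, f₂, f₃ : ℤ/pℤ → ℂ be 1-bounded functions. Then |Λ_S(f₁,f₂,f₃)| ≤ (p/|S|)^{1/2} · min_{1 ≤ k ≤ 3} ‖f_k‖_{U³(ℤ/pℤ)}. -/
/-- The counting functional
`Λ_S(f₁,f₂,f₃) = (1/p)(1/|S|) ∑_{x ∈ ℤ/pℤ} ∑_{d ∈ S} f₁(x) f₂(x+d) f₃(x+2d)`. -/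
noncomputable def Lam (p : ℕ) [NeZero p] (S : Finset (ZMod p))
    (f₁ f₂ f₃ : ZMod p → ℂ) : ℂ :=
  (p : ℂ)⁻¹ * (S.card : ℂ)⁻¹ *
    ∑ x : ZMod p, ∑ d ∈ S, f₁ x * f₂ (x + d) * f₃ (x + 2 * d)

/-- The multiplicative difference operator `Δ_h f(x) = f(x) · conj(f(x+h))`. -/
def diffOp {p : ℕ} (h : ZMod p) (f : ZMod p → ℂ) : ZMod p → ℂ :=
  fun x => f x * (starRingEnd ℂ) (f (x + h))

/-- The Gowers `U³` norm of `f : ℤ/pℤ → ℂ`: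
`‖f‖_{U³} = (𝔼_{x,h₁,h₂,h₃} Δ_{h₁}Δ_{h₂}Δ_{h₃} f(x))^{1/8}`. -/
noncomputable def gowersU3 (p : ℕ) [NeZero p] (f : ZMod p → ℂ) : ℝ :=
  ((∑ x : ZMod p, ∑ h₁ : ZMod p, ∑ h₂ : ZMod p, ∑ h₃ : ZMod p,
      diffOp h₁ (diffOp h₂ (diffOp h₃ f)) x).re / (p : ℝ) ^ 4) ^ ((1 : ℝ) / 8)


/-!
Cauchy–Schwarz over `d ∈ S` bounds `|Λ_S|²` by
`(p²|S|)⁻¹ ∑_{d ∈ ℤ/pℤ} |∑_x f₁(x) f₂(x+d) f₃(x+2d)|²`, and expanding the square turns this sum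
into `∑_h` of the full three-term progression counts of `Δ_h f₁, Δ_h f₂, Δ_h f₃`. Each such count
is controlled by the `U²` norm of any one of its arguments (two further Cauchy–Schwarz steps, which
need `2` to be invertible mod `p`), and Hölder's inequality in `h` assembles these `U²` norms of
`Δ_h f_k` into `‖f_k‖_{U³}`.
-/

open Finset ComplexConjugate

section CauchySchwarz

variable {ι : Type*} (s : Finset ι)

lemma norm_sum_sq_le_card_mul (u : ι → ℂ) :
    ‖∑ i ∈ s, u i‖ ^ 2 ≤ #s * ∑ i ∈ s, ‖u i‖ ^ 2 :=
  (pow_le_pow_left₀ (norm_nonneg _) (norm_sum_le _ _) 2).trans sq_sum_le_card_mul_sum_sq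

lemma norm_sum_mul_sq_le_card_mul {w : ι → ℂ} (hw : ∀ i, ‖w i‖ ≤ 1) (u : ι → ℂ) :
    ‖∑ i ∈ s, w i * u i‖ ^ 2 ≤ #s * ∑ i ∈ s, ‖u i‖ ^ 2 := by
  refine (norm_sum_sq_le_card_mul s _).trans (mul_le_mul_of_nonneg_left ?_ (by positivity))
  refine sum_le_sum fun i _ => pow_le_pow_left₀ (norm_nonneg _) ?_ 2
  simpa [norm_mul] using mul_le_mul_of_nonneg_right (hw i) (norm_nonneg (u i))

end CauchySchwarz

section AddCommGroup

variable {G : Type*} [AddCommGroup G] [Fintype G]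

def autocorr (g : G → ℂ) (h : G) : ℂ := ∑ x, g x * conj (g (x + h))

/-- `autocorrEnergy g = |G|³ ‖g‖_{U²}⁴`. -/
noncomputable def autocorrEnergy (g : G → ℂ) : ℝ := ∑ h, ‖autocorr g h‖ ^ 2

lemma ofReal_norm_sum_sq (u : G → ℂ) :
    ((‖∑ d, u d‖ ^ 2 : ℝ) : ℂ) = ∑ h, ∑ d, u d * conj (u (d + h)) := by
  rw [Complex.ofReal_pow, ← Complex.mul_conj', map_sum, sum_mul_sum]
  refine (sum_congr rfl fun d _ => ?_).trans sum_comm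
  exact (Equiv.sum_comp (Equiv.addLeft d) fun e => u d * conj (u e)).symm

lemma norm_autocorr_le {g : G → ℂ} (hg : ∀ x, ‖g x‖ ≤ 1) (h : G) :
    ‖autocorr g h‖ ≤ Fintype.card G := by
  refine (norm_sum_le _ _).trans ?_
  simpa using sum_le_sum fun x (_ : x ∈ univ) =>
    show ‖g x * conj (g (x + h))‖ ≤ 1 by
      simpa using mul_le_one₀ (hg x) (norm_nonneg _) (hg (x + h))

lemma autocorrEnergy_nonneg (g : G → ℂ) : 0 ≤ autocorrEnergy g :=
  sum_nonneg fun _ _ => by positivity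

lemma autocorrEnergy_le {g : G → ℂ} (hg : ∀ x, ‖g x‖ ≤ 1) :
    autocorrEnergy g ≤ (Fintype.card G : ℝ) ^ 3 := by
  calc autocorrEnergy g ≤ ∑ _h : G, (Fintype.card G : ℝ) ^ 2 :=
        sum_le_sum fun h _ => pow_le_pow_left₀ (norm_nonneg _) (norm_autocorr_le hg h) 2
    _ = (Fintype.card G : ℝ) ^ 3 := by simp [pow_succ]; ring

end AddCommGroup

section CommRing

variable {R : Type*} [CommRing R] [Fintype R]

def apCorr (f₁ f₂ f₃ : R → ℂ) (d : R) : ℂ := ∑ x, f₁ x * f₂ (x + d) * f₃ (x + 2 * d)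

def apCount (g₁ g₂ g₃ : R → ℂ) : ℂ := ∑ x, ∑ d, g₁ x * g₂ (x + d) * g₃ (x + 2 * d)

lemma sum_comp_mul_of_isUnit {M : Type*} [AddCommMonoid M] {c : R} (hc : IsUnit c)
    (ψ : R → M) : ∑ d, ψ (c * d) = ∑ v, ψ v :=
  Equiv.sum_comp (Units.mulLeft hc.unit) ψ

lemma sum_comp_add_mul_of_isUnit {M : Type*} [AddCommMonoid M] {c : R} (hc : IsUnit c)
    (ψ : R → M) (u : R) : ∑ d, ψ (u + c * d) = ∑ v, ψ v :=
  (sum_comp_mul_of_isUnit hc fun v => ψ (u + v)).trans (Equiv.sum_comp (Equiv.addLeft u) ψ)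

lemma sum_sum_mul_eq_of_isUnit_sub {a b : R} (hab : IsUnit (b - a)) (φ ψ : R → ℂ) :
    ∑ y, ∑ d, φ (y + a * d) * ψ (y + b * d) = (∑ u, φ u) * ∑ v, ψ v := by
  calc ∑ y, ∑ d, φ (y + a * d) * ψ (y + b * d)
      = ∑ d, ∑ u, φ u * ψ (u + (b - a) * d) := by
        rw [sum_comm]
        refine sum_congr rfl fun d _ =>
          Fintype.sum_equiv (Equiv.addRight (a * d)) _ _ fun y => ?_
        simp only [Equiv.coe_addRight]
        ring_nf
    _ = ∑ u, φ u * ∑ d, ψ (u + (b - a) * d) := by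
        rw [sum_comm]
        simp_rw [mul_sum]
    _ = (∑ u, φ u) * ∑ v, ψ v := by
        simp_rw [sum_comp_add_mul_of_isUnit hab, sum_mul]

lemma ofReal_sum_norm_sq_eq_sum_autocorr_mul (g₂ g₃ : R → ℂ) :
    ((∑ x, ‖∑ d, g₂ (x + d) * g₃ (x + 2 * d)‖ ^ 2 : ℝ) : ℂ) =
      ∑ h, autocorr g₂ h * autocorr g₃ (2 * h) := by
  rw [Complex.ofReal_sum]
  simp_rw [ofReal_norm_sum_sq]
  rw [sum_comm]
  refine sum_congr rfl fun h _ => ?_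
  have h21 : IsUnit (2 - 1 : R) := by norm_num
  rw [autocorr, autocorr, ← sum_sum_mul_eq_of_isUnit_sub h21]
  refine sum_congr rfl fun x _ => sum_congr rfl fun d _ => ?_
  simp only [map_mul]
  ring_nf

lemma norm_apCount_sq_le {g₁ : R → ℂ} (hg₁ : ∀ x, ‖g₁ x‖ ≤ 1) (g₂ g₃ : R → ℂ) :
    ‖apCount g₁ g₂ g₃‖ ^ 2 ≤
      Fintype.card R * ∑ x, ‖∑ d, g₂ (x + d) * g₃ (x + 2 * d)‖ ^ 2 := by
  simpa [apCount, mul_sum, mul_assoc] using norm_sum_mul_sq_le_card_mul univ hg₁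
    fun x => ∑ d, g₂ (x + d) * g₃ (x + 2 * d)

lemma norm_apCount_pow_four_le (h2 : IsUnit (2 : R)) {g₁ : R → ℂ} (hg₁ : ∀ x, ‖g₁ x‖ ≤ 1)
    (g₂ g₃ : R → ℂ) :
    ‖apCount g₁ g₂ g₃‖ ^ 4 ≤
      (Fintype.card R : ℝ) ^ 2 * (autocorrEnergy g₂ * autocorrEnergy g₃) := by
  set Q := ∑ x, ‖∑ d, g₂ (x + d) * g₃ (x + 2 * d)‖ ^ 2
  have hQ : Q ≤ ∑ h, ‖autocorr g₂ h‖ * ‖autocorr g₃ (2 * h)‖ := by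
    calc Q = ‖(Q : ℂ)‖ := (Complex.norm_of_nonneg (by positivity)).symm
      _ ≤ _ := by
          rw [ofReal_sum_norm_sq_eq_sum_autocorr_mul]
          simpa only [norm_mul] using
            norm_sum_le univ fun h => autocorr g₂ h * autocorr g₃ (2 * h)
  have hCS : (∑ h, ‖autocorr g₂ h‖ * ‖autocorr g₃ (2 * h)‖) ^ 2 ≤
      autocorrEnergy g₂ * autocorrEnergy g₃ := by
    refine (sum_mul_sq_le_sq_mul_sq _ _ _).trans_eq ?_
    rw [autocorrEnergy, autocorrEnergy,
      sum_comp_mul_of_isUnit h2 fun h => ‖autocorr g₃ h‖ ^ 2]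
  calc ‖apCount g₁ g₂ g₃‖ ^ 4 = (‖apCount g₁ g₂ g₃‖ ^ 2) ^ 2 := by ring
    _ ≤ (Fintype.card R * Q) ^ 2 :=
        pow_le_pow_left₀ (by positivity) (norm_apCount_sq_le hg₁ g₂ g₃) 2
    _ = (Fintype.card R : ℝ) ^ 2 * Q ^ 2 := by ring
    _ ≤ (Fintype.card R : ℝ) ^ 2 * (autocorrEnergy g₂ * autocorrEnergy g₃) := by
        gcongr
        exact (pow_le_pow_left₀ (by positivity) hQ 2).trans hCS

lemma apCount_comm (g₁ g₂ g₃ : R → ℂ) : apCount g₁ g₂ g₃ = apCount g₃ g₂ g₁ := by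
  refine sum_comm.trans ((Fintype.sum_equiv (Equiv.neg R) _ _ fun d => ?_).trans sum_comm)
  refine Fintype.sum_equiv (Equiv.addRight (2 * d)) _ _ fun x => ?_
  simp only [Equiv.neg_apply, Equiv.coe_addRight]
  ring_nf

lemma norm_apCount_pow_four_le_middle (h2 : IsUnit (2 : R)) {g₁ g₂ g₃ : R → ℂ}
    (hg₁ : ∀ x, ‖g₁ x‖ ≤ 1) (hg₃ : ∀ x, ‖g₃ x‖ ≤ 1) :
    ‖apCount g₁ g₂ g₃‖ ^ 4 ≤ (Fintype.card R : ℝ) ^ 5 * autocorrEnergy g₂ := by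
  calc ‖apCount g₁ g₂ g₃‖ ^ 4
      ≤ (Fintype.card R : ℝ) ^ 2 * (autocorrEnergy g₂ * Fintype.card R ^ 3) := by
        refine (norm_apCount_pow_four_le h2 hg₁ g₂ g₃).trans ?_
        gcongr
        exacts [autocorrEnergy_nonneg g₂, autocorrEnergy_le hg₃]
    _ = _ := by ring

lemma norm_apCount_pow_four_le_right (h2 : IsUnit (2 : R)) {g₁ g₂ g₃ : R → ℂ}
    (hg₁ : ∀ x, ‖g₁ x‖ ≤ 1) (hg₂ : ∀ x, ‖g₂ x‖ ≤ 1) :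
    ‖apCount g₁ g₂ g₃‖ ^ 4 ≤ (Fintype.card R : ℝ) ^ 5 * autocorrEnergy g₃ := by
  calc ‖apCount g₁ g₂ g₃‖ ^ 4
      ≤ (Fintype.card R : ℝ) ^ 2 * (Fintype.card R ^ 3 * autocorrEnergy g₃) := by
        refine (norm_apCount_pow_four_le h2 hg₁ g₂ g₃).trans ?_
        gcongr
        exacts [autocorrEnergy_nonneg g₃, autocorrEnergy_le hg₂]
    _ = _ := by ring

lemma norm_apCount_pow_four_le_left (h2 : IsUnit (2 : R)) {g₁ g₂ g₃ : R → ℂ}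
    (hg₂ : ∀ x, ‖g₂ x‖ ≤ 1) (hg₃ : ∀ x, ‖g₃ x‖ ≤ 1) :
    ‖apCount g₁ g₂ g₃‖ ^ 4 ≤ (Fintype.card R : ℝ) ^ 5 * autocorrEnergy g₁ := by
  rw [apCount_comm]
  exact norm_apCount_pow_four_le_right h2 hg₃ hg₂

end CommRing

lemma norm_diffOp_le_one {p : ℕ} {f : ZMod p → ℂ} (hf : ∀ x, ‖f x‖ ≤ 1) (h x : ZMod p) :
    ‖diffOp h f x‖ ≤ 1 := by
  simpa [diffOp] using mul_le_one₀ (hf x) (norm_nonneg _) (hf (x + h))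

section ZMod

variable {p : ℕ} [NeZero p]

lemma ofReal_sum_norm_sq_apCorr (f₁ f₂ f₃ : ZMod p → ℂ) :
    ((∑ d, ‖apCorr f₁ f₂ f₃ d‖ ^ 2 : ℝ) : ℂ) =
      ∑ h, apCount (diffOp h f₁) (diffOp h f₂) (diffOp h f₃) := by
  rw [Complex.ofReal_sum]
  simp_rw [apCorr, ofReal_norm_sum_sq]
  refine sum_comm.trans (sum_congr rfl fun h _ => sum_comm.trans ?_)
  refine sum_congr rfl fun x _ => sum_congr rfl fun d _ => ?_
  simp only [diffOp, map_mul]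
  ring_nf

lemma sum_diffOp_diffOp (g : ZMod p → ℂ) :
    ∑ x, ∑ h₁, ∑ h₂, diffOp h₁ (diffOp h₂ g) x = autocorrEnergy g := by
  calc ∑ x, ∑ h₁, ∑ h₂, diffOp h₁ (diffOp h₂ g) x
      = ∑ h₂, ∑ h₁, ∑ x, diffOp h₁ (diffOp h₂ g) x :=
        sum_comm_cycle.trans (sum_congr rfl fun _ _ => sum_comm)
    _ = ∑ h₂, ((‖autocorr g h₂‖ ^ 2 : ℝ) : ℂ) :=
        sum_congr rfl fun h₂ _ => (ofReal_norm_sum_sq (diffOp h₂ g)).symm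
    _ = autocorrEnergy g := by rw [autocorrEnergy, Complex.ofReal_sum]

lemma gowersU3_eq (f : ZMod p → ℂ) :
    gowersU3 p f = ((∑ h, autocorrEnergy (diffOp h f)) / (p : ℝ) ^ 4) ^ ((1 : ℝ) / 8) := by
  have hswap : ∑ x : ZMod p, ∑ h₁ : ZMod p, ∑ h₂ : ZMod p, ∑ h₃ : ZMod p,
        diffOp h₁ (diffOp h₂ (diffOp h₃ f)) x =
      ∑ h₃, ∑ x, ∑ h₁, ∑ h₂, diffOp h₁ (diffOp h₂ (diffOp h₃ f)) x :=
    (sum_congr rfl fun _ _ => (sum_congr rfl fun _ _ => sum_comm).trans sum_comm).trans sum_comm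
  simp_rw [gowersU3, hswap, sum_diffOp_diffOp, ← Complex.ofReal_sum, Complex.ofReal_re]

lemma gowersU3_nonneg (f : ZMod p → ℂ) : 0 ≤ gowersU3 p f := by
  rw [gowersU3_eq]
  exact Real.rpow_nonneg (div_nonneg (sum_nonneg fun _ _ => autocorrEnergy_nonneg _)
    (by positivity)) _

lemma gowersU3_pow_eight (f : ZMod p → ℂ) :
    gowersU3 p f ^ 8 = (∑ h, autocorrEnergy (diffOp h f)) / (p : ℝ) ^ 4 := by
  rw [gowersU3_eq, ← Real.rpow_natCast, ← Real.rpow_mul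
    (div_nonneg (sum_nonneg fun _ _ => autocorrEnergy_nonneg _) (by positivity))]
  norm_num

lemma sum_norm_sq_apCorr_le {f₁ f₂ f₃ φ : ZMod p → ℂ}
    (hcount : ∀ h, ‖apCount (diffOp h f₁) (diffOp h f₂) (diffOp h f₃)‖ ^ 4 ≤
      (p : ℝ) ^ 5 * autocorrEnergy (diffOp h φ)) :
    ∑ d, ‖apCorr f₁ f₂ f₃ d‖ ^ 2 ≤ (p : ℝ) ^ 3 * gowersU3 p φ ^ 2 := by
  set T := fun h => ‖apCount (diffOp h f₁) (diffOp h f₂) (diffOp h f₃)‖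
  have hsum : ∑ d, ‖apCorr f₁ f₂ f₃ d‖ ^ 2 ≤ ∑ h, T h := by
    rw [← Complex.norm_of_nonneg (by positivity : (0 : ℝ) ≤ ∑ d, ‖apCorr f₁ f₂ f₃ d‖ ^ 2),
      ofReal_sum_norm_sq_apCorr]
    exact norm_sum_le _ _
  have hpow : (∑ h, T h) ^ 4 ≤ ((p : ℝ) ^ 3 * gowersU3 p φ ^ 2) ^ 4 := by
    have hp : (p : ℝ) ≠ 0 := NeZero.ne _
    calc (∑ h, T h) ^ 4 ≤ (p : ℝ) ^ 3 * ∑ h, T h ^ 4 := by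
          simpa using
            pow_sum_le_card_mul_sum_pow (s := univ) (f := T) (fun h _ => norm_nonneg _) 3
      _ ≤ (p : ℝ) ^ 3 * ∑ h, (p : ℝ) ^ 5 * autocorrEnergy (diffOp h φ) := by
          gcongr with h
          exact hcount h
      _ = ((p : ℝ) ^ 3 * gowersU3 p φ ^ 2) ^ 4 := by
          rw [← mul_sum, mul_pow, ← pow_mul (gowersU3 p φ), gowersU3_pow_eight]
          field_simp
  exact hsum.trans ((pow_le_pow_iff_left₀ (by positivity)
    (by positivity) (by norm_num)).1 hpow)

lemma lam_eq_sum_apCorr (S : Finset (ZMod p)) (f₁ f₂ f₃ : ZMod p → ℂ) :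
    Lam p S f₁ f₂ f₃ = (p : ℂ)⁻¹ * (#S : ℂ)⁻¹ * ∑ d ∈ S, apCorr f₁ f₂ f₃ d := by
  rw [Lam, sum_comm]
  rfl

lemma norm_lam_sq_le (S : Finset (ZMod p)) (f₁ f₂ f₃ : ZMod p → ℂ) :
    ‖Lam p S f₁ f₂ f₃‖ ^ 2 ≤ ((p : ℝ) ^ 2 * #S)⁻¹ * ∑ d, ‖apCorr f₁ f₂ f₃ d‖ ^ 2 := by
  have hS : ‖∑ d ∈ S, apCorr f₁ f₂ f₃ d‖ ^ 2 ≤ #S * ∑ d, ‖apCorr f₁ f₂ f₃ d‖ ^ 2 :=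
    (norm_sum_sq_le_card_mul S _).trans (by gcongr; exact subset_univ S)
  calc ‖Lam p S f₁ f₂ f₃‖ ^ 2
      = ((p : ℝ) ^ 2)⁻¹ * ((#S : ℝ)⁻¹ ^ 2 * ‖∑ d ∈ S, apCorr f₁ f₂ f₃ d‖ ^ 2) := by
        rw [lam_eq_sum_apCorr]
        simp only [norm_mul, norm_inv, Complex.norm_natCast]
        ring
    _ ≤ ((p : ℝ) ^ 2)⁻¹ * ((#S : ℝ)⁻¹ ^ 2 * (#S * ∑ d, ‖apCorr f₁ f₂ f₃ d‖ ^ 2)) := by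
        gcongr
    _ = ((p : ℝ) ^ 2 * #S)⁻¹ * ∑ d, ‖apCorr f₁ f₂ f₃ d‖ ^ 2 := by
        -- holds also for `#S = 0`
        have hinv : (#S : ℝ)⁻¹ ^ 2 * #S = (#S : ℝ)⁻¹ := by
          simpa only [sq, inv_inv] using mul_self_mul_inv (#S : ℝ)⁻¹
        rw [mul_inv]
        linear_combination ((p : ℝ) ^ 2)⁻¹ * (∑ d, ‖apCorr f₁ f₂ f₃ d‖ ^ 2) * hinv

lemma norm_lam_le_of_forall_norm_apCount {S : Finset (ZMod p)} {f₁ f₂ f₃ φ : ZMod p → ℂ}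
    (hcount : ∀ h, ‖apCount (diffOp h f₁) (diffOp h f₂) (diffOp h f₃)‖ ^ 4 ≤
      (p : ℝ) ^ 5 * autocorrEnergy (diffOp h φ)) :
    ‖Lam p S f₁ f₂ f₃‖ ≤ √((p : ℝ) / #S) * gowersU3 p φ := by
  rw [← Real.sqrt_sq (gowersU3_nonneg φ), ← Real.sqrt_mul' _ (sq_nonneg _)]
  refine Real.le_sqrt_of_sq_le ?_
  have hp : (p : ℝ) ≠ 0 := NeZero.ne _
  calc ‖Lam p S f₁ f₂ f₃‖ ^ 2 ≤ ((p : ℝ) ^ 2 * #S)⁻¹ * ∑ d, ‖apCorr f₁ f₂ f₃ d‖ ^ 2 :=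
        norm_lam_sq_le S f₁ f₂ f₃
    _ ≤ ((p : ℝ) ^ 2 * #S)⁻¹ * ((p : ℝ) ^ 3 * gowersU3 p φ ^ 2) := by
        gcongr
        exact sum_norm_sq_apCorr_le hcount
    _ = (p : ℝ) / #S * gowersU3 p φ ^ 2 := by
        field_simp

theorem norm_lam_le_of_isUnit_two (h2 : IsUnit (2 : ZMod p)) (S : Finset (ZMod p))
    {f₁ f₂ f₃ : ZMod p → ℂ} (hf₁ : ∀ x, ‖f₁ x‖ ≤ 1) (hf₂ : ∀ x, ‖f₂ x‖ ≤ 1)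
    (hf₃ : ∀ x, ‖f₃ x‖ ≤ 1) :
    ‖Lam p S f₁ f₂ f₃‖ ≤
      √((p : ℝ) / #S) * min (gowersU3 p f₁) (min (gowersU3 p f₂) (gowersU3 p f₃)) := by
  have hcard : (Fintype.card (ZMod p) : ℝ) = p := by rw [ZMod.card]
  rw [mul_min_of_nonneg _ _ (Real.sqrt_nonneg _), mul_min_of_nonneg _ _ (Real.sqrt_nonneg _)]
  refine le_min (norm_lam_le_of_forall_norm_apCount fun h => ?_)
    (le_min (norm_lam_le_of_forall_norm_apCount fun h => ?_)
      (norm_lam_le_of_forall_norm_apCount fun h => ?_)) <;> rw [← hcard]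
  · exact norm_apCount_pow_four_le_left h2 (norm_diffOp_le_one hf₂ h) (norm_diffOp_le_one hf₃ h)
  · exact norm_apCount_pow_four_le_middle h2 (norm_diffOp_le_one hf₁ h)
      (norm_diffOp_le_one hf₃ h)
  · exact norm_apCount_pow_four_le_right h2 (norm_diffOp_le_one hf₁ h)
      (norm_diffOp_le_one hf₂ h)

end ZMod

theorem lam_von_neumann_general (N p : ℕ) (hp : p.Prime) [NeZero p]
    (hp3 : 3 * N < p) (hp6 : p < 6 * N)
    (S : Finset (ZMod p))
    (f₁ f₂ f₃ : ZMod p → ℂ)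
    (hf₁ : ∀ x, ‖f₁ x‖ ≤ 1) (hf₂ : ∀ x, ‖f₂ x‖ ≤ 1)
    (hf₃ : ∀ x, ‖f₃ x‖ ≤ 1) :
    ‖Lam p S f₁ f₂ f₃‖ ≤
      Real.sqrt ((p : ℝ) / S.card) *
        min (gowersU3 p f₁) (min (gowersU3 p f₂) (gowersU3 p f₃)) := by
  have hodd : Nat.Coprime 2 p := (Nat.coprime_primes Nat.prime_two hp).2 (by omega)
  have h2 : IsUnit (2 : ZMod p) := by
    simpa using (ZMod.isUnit_iff_coprime 2 p).2 hodd
  exact norm_lam_le_of_isUnit_two h2 S hf₁ hf₂ hf₃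

/-- Generalised von Neumann theorem for `Λ_S`: for 1-bounded
`f₁, f₂, f₃ : ℤ/pℤ → ℂ`,
`|Λ_S(f₁,f₂,f₃)| ≤ (p/|S|)^{1/2} · min_k ‖f_k‖_{U³}`. -/
theorem lam_von_neumann (N p : ℕ) (hp : p.Prime) [NeZero p]
    (hp3 : 3 * N < p) (hp6 : p < 6 * N)
    (S : Finset (ZMod p)) (hSne : S.Nonempty)
    (hS : S ⊆ (Finset.Icc 1 N).image (Nat.cast : ℕ → ZMod p))
    (f₁ f₂ f₃ : ZMod p → ℂ)
    (hf₁ : ∀ x, ‖f₁ x‖ ≤ 1) (hf₂ : ∀ x, ‖f₂ x‖ ≤ 1)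
    (hf₃ : ∀ x, ‖f₃ x‖ ≤ 1) :
    ‖Lam p S f₁ f₂ f₃‖ ≤
      Real.sqrt ((p : ℝ) / S.card) *
        min (gowersU3 p f₁) (min (gowersU3 p f₂) (gowersU3 p f₃)) :=
  lam_von_neumann_general N p hp hp3 hp6 S f₁ f₂ f₃ hf₁ hf₂ hf₃
end
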